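/- Let L be a regular language over a finite alphabet Σ (i.e., the syntactic congruence ~_L has finitely many classes) that satisfies the operational semi-extensible ZG condition with some threshold p ∈ ℕ. Then for every positive integer n such that x^n ~_L x^{2n} for all words x, the language L satisfies the algebraic semi-extensible ZG condition for n: y ++ x^{n+1} ~_L x^{n+1} ++ y for all words x, y, and for all words x, y, z and every letter a that is not neutral for L, y ∈ L implies x ++ y ++ z ++ a^n ∈ L. -/

import Mathlib

variable {α : Type*}

/-- `u` is a factor of `v`: `v = s ++ u ++ t` for some words `s, t`. -/
def IsFactor (u v : List α) : Prop := ∃ s t : List α, v = s ++ u ++ t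

/-- A letter `e` is neutral for the language `L`. -/
def Neutral (L : Set (List α)) (e : α) : Prop :=
  ∀ s t : List α, s ++ t ∈ L ↔ s ++ [e] ++ t ∈ L

/-- A language is extensible if it contains all extensions of its members. -/
def Extensible (L : Set (List α)) : Prop :=
  ∀ u v : List α, u ∈ L → IsFactor u v → v ∈ L

open Classical in
/-- `u_{-S}`: delete from `u` all occurrences of letters in `S`. -/
noncomputable def removeLetters (S : Set α) (u : List α) : List α :=
  u.filter (fun a => decide (a ∉ S))

/-- `Cond L S`: words `u` such that some `v ∈ L` has `v_{-S}` a factor of `u_{-S}`. -/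
def Cond (L : Set (List α)) (S : Set α) : Set (List α) :=
  {u | ∃ v ∈ L, IsFactor (removeLetters S v) (removeLetters S u)}

open Classical in
/-- Number of occurrences of the letter `a` in the word `u`. -/
noncomputable def countOcc (a : α) (u : List α) : ℕ :=
  u.countP (fun b => decide (b = a))

/-- `T_p(u)`: letters that are not neutral for `L` and occur at least `p` times in `u`. -/
def freqLetters (L : Set (List α)) (p : ℕ) (u : List α) : Set α :=
  {a | ¬ Neutral L a ∧ p ≤ countOcc a u}

/-- Operational semi-extensible ZG condition with threshold `p`. -/
def OperationalSE (L : Set (List α)) (p : ℕ) : Prop :=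
  ∀ u : List α, freqLetters L p u = ∅ ∨
    (removeLetters (freqLetters L p u) u ∈ Cond L (freqLetters L p u) ↔ u ∈ L)

/-- Self-contained semi-extensible ZG condition with threshold `p`. -/
def SelfContainedSE (L : Set (List α)) (p : ℕ) : Prop :=
  ∀ u v : List α, v ∈ L → freqLetters L p u ≠ ∅ →
    IsFactor (removeLetters (freqLetters L p u) v)
             (removeLetters (freqLetters L p u) u) →
    u ∈ L

/-- Syntactic congruence of `L`. -/
def SyntEq (L : Set (List α)) (u v : List α) : Prop :=
  ∀ s t : List α, s ++ u ++ t ∈ L ↔ s ++ v ++ t ∈ L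

/-- The setoid on words given by the syntactic congruence of `L`. -/
def syntSetoid (L : Set (List α)) : Setoid (List α) where
  r := SyntEq L
  iseqv := ⟨fun _ _ _ => Iff.rfl, fun h s t => (h s t).symm,
            fun h1 h2 s t => (h1 s t).trans (h2 s t)⟩

/-- `wpow x k` is the `k`-fold concatenation `x^k`. -/
def wpow (x : List α) : ℕ → List α
  | 0 => []
  | k + 1 => x ++ wpow x k

/-- Algebraic semi-extensible ZG condition for `n`: the ZG equation plus semi-extensibility. -/
def AlgebraicSE (L : Set (List α)) (n : ℕ) : Prop :=
  (∀ x y : List α, SyntEq L (y ++ wpow x (n+1)) (wpow x (n+1) ++ y)) ∧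
  (∀ (x y z : List α) (a : α), ¬ Neutral L a → y ∈ L →
    x ++ y ++ z ++ wpow [a] n ∈ L)

/-- `w[l..r]` with 1-based positions; empty when `r < l`. -/
def wslice (w : List α) (l r : ℕ) : List α := (w.drop (l - 1)).take (r + 1 - l)

/-- The pair `(l, r)` is good: `T_p(w[l..r]) ≠ ∅` and `w[l..r] ∈ Cond(T_p(w[l..r]))`. -/
def Good (L : Set (List α)) (p : ℕ) (w : List α) (l r : ℕ) : Prop :=
  freqLetters L p (wslice w l r) ≠ ∅ ∧
  wslice w l r ∈ Cond L (freqLetters L p (wslice w l r))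

/-- The limit `r_l`: least `r ≥ l` such that `(l, r')` is good for all `r ≤ r' ≤ |w|`. -/
noncomputable def limit (L : Set (List α)) (p : ℕ) (w : List α) (l : ℕ) : ℕ :=
  sInf {r | l ≤ r ∧ ∀ r' : ℕ, r ≤ r' → r' ≤ w.length → Good L p w l r'}

-- basic SyntEq lemmas
theorem SyntEq.refl (L : Set (List α)) (u : List α) : SyntEq L u u := fun _ _ => Iff.rfl
theorem SyntEq.symm' {L : Set (List α)} {u v} (h : SyntEq L u v) : SyntEq L v u :=
  fun s t => (h s t).symm
theorem SyntEq.trans' {L : Set (List α)} {u v w} (h1 : SyntEq L u v) (h2 : SyntEq L v w) :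
    SyntEq L u w := fun s t => (h1 s t).trans (h2 s t)

theorem SyntEq.appendLeft {L : Set (List α)} (w : List α) {u v} (h : SyntEq L u v) :
    SyntEq L (w ++ u) (w ++ v) := by
  intro s t
  have := h (s ++ w) t
  simpa [List.append_assoc] using this

theorem SyntEq.appendRight {L : Set (List α)} (w : List α) {u v} (h : SyntEq L u v) :
    SyntEq L (u ++ w) (v ++ w) := by
  intro s t
  have := h s (w ++ t)
  simpa [List.append_assoc] using this

theorem SyntEq.appendCongr {L : Set (List α)} {u v u' v'} (h : SyntEq L u v)
    (h' : SyntEq L u' v') : SyntEq L (u ++ u') (v ++ v') :=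
  (SyntEq.appendRight u' h).trans' (SyntEq.appendLeft v h')

theorem wpow_add (x : List α) (a b : ℕ) : wpow x (a + b) = wpow x a ++ wpow x b := by
  induction a with
  | zero => simp [wpow]
  | succ k ih => rw [Nat.succ_add]; simp [wpow, ih]

theorem SyntEq.wpowCongr {L : Set (List α)} {u v} (h : SyntEq L u v) (m : ℕ) :
    SyntEq L (wpow u m) (wpow v m) := by
  induction m with
  | zero => exact SyntEq.refl L []
  | succ k ih => exact SyntEq.appendCongr h ih

theorem mem_wpow {x : List α} {a : α} {m : ℕ} (h : a ∈ wpow x m) : a ∈ x := by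
  induction m with
  | zero => simp [wpow] at h
  | succ k ih => rcases List.mem_append.1 h with h | h; exact h; exact ih h

theorem countOcc_append (a : α) (u v : List α) :
    countOcc a (u ++ v) = countOcc a u + countOcc a v := by
  simp [countOcc, List.countP_append]

theorem countOcc_wpow (a : α) (x : List α) (m : ℕ) :
    countOcc a (wpow x m) = m * countOcc a x := by
  induction m with
  | zero => simp [wpow, countOcc]
  | succ k ih => rw [wpow, countOcc_append, ih]; ring

theorem countOcc_pos_of_mem {a : α} {x : List α} (h : a ∈ x) : 0 < countOcc a x := by
  classical
  rw [countOcc, List.countP_pos_iff]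
  exact ⟨a, h, by simp⟩

-- pumping
theorem pump {L : Set (List α)} {x : List α} {n : ℕ}
    (h : SyntEq L (wpow x n) (wpow x (2 * n))) :
    ∀ k : ℕ, 1 ≤ k → SyntEq L (wpow x n) (wpow x (k * n)) := by
  intro k hk
  induction k with
  | zero => omega
  | succ m ih =>
    rcases Nat.eq_or_lt_of_le hk with h1 | h1
    · rw [← h1, one_mul]; exact SyntEq.refl L _
    · have ihm := ih (by omega)
      have : SyntEq L (wpow x (2 * n)) (wpow x ((m + 1) * n)) := by
        have h2 : 2 * n = n + n := by ring
        have h3 : (m + 1) * n = n + m * n := by ring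
        rw [h2, h3, wpow_add, wpow_add]
        exact SyntEq.appendLeft _ ihm
      exact (h.trans' this)

-- neutral removal
theorem neutral_syntEq {L : Set (List α)} {e : α} (h : Neutral L e) :
    SyntEq L [e] ([] : List α) := by
  intro s t
  simpa using (h s t).symm

theorem removeNeutral_syntEq (L : Set (List α)) (x : List α) :
    SyntEq L x (removeLetters {a | Neutral L a} x) := by
  classical
  induction x with
  | nil => exact SyntEq.refl L []
  | cons a u ih =>
    by_cases h : Neutral L a
    · have h1 : removeLetters {a | Neutral L a} (a :: u)
          = removeLetters {a | Neutral L a} u := by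
        simp [removeLetters, List.filter_cons, h]
      rw [h1]
      have : SyntEq L (a :: u) u := by
        have := SyntEq.appendRight (L := L) u (neutral_syntEq h)
        simpa using this
      exact this.trans' ih
    · have h1 : removeLetters {a | Neutral L a} (a :: u)
          = a :: removeLetters {a | Neutral L a} u := by
        simp [removeLetters, List.filter_cons, h]
      rw [h1]
      have := SyntEq.appendLeft (L := L) [a] ih
      simpa using this

theorem removeLetters_append (S : Set α) (u v : List α) :
    removeLetters S (u ++ v) = removeLetters S u ++ removeLetters S v := by
  simp [removeLetters]

theorem removeLetters_idem (S : Set α) (u : List α) :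
    removeLetters S (removeLetters S u) = removeLetters S u := by
  simp [removeLetters, List.filter_filter]

theorem removeLetters_eq_nil {S : Set α} {u : List α} (h : ∀ a ∈ u, a ∈ S) :
    removeLetters S u = [] := by
  classical
  rw [removeLetters, List.filter_eq_nil_iff]
  intro a ha
  simpa using h a ha

theorem mem_removeLetters_notin {S : Set α} {u : List α} {a : α}
    (h : a ∈ removeLetters S u) : a ∉ S := by
  classical
  rw [removeLetters, List.mem_filter] at h
  simpa using h.2

theorem freqLetters_eq_of_counts {L : Set (List α)} {p : ℕ} {u u' : List α}
    (h : ∀ a, countOcc a u = countOcc a u') :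
    freqLetters L p u = freqLetters L p u' := by
  ext a
  simp only [freqLetters, Set.mem_setOf_eq, h a]

theorem claimA {L : Set (List α)} {p : ℕ} (hop : OperationalSE L p)
    (x s y t : List α) (hx : x ≠ []) (hxn : ∀ a ∈ x, ¬ Neutral L a)
    (K : ℕ) (hK : p ≤ K) :
    s ++ y ++ wpow x K ++ t ∈ L ↔ s ++ wpow x K ++ y ++ t ∈ L := by
  set u : List α := s ++ y ++ wpow x K ++ t with hu
  set u' : List α := s ++ wpow x K ++ y ++ t with hu'
  have hcount : ∀ a, countOcc a u = countOcc a u' := by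
    intro a
    simp only [hu, hu', countOcc_append]
    ring
  have hTT : freqLetters L p u = freqLetters L p u' := freqLetters_eq_of_counts hcount
  set T : Set α := freqLetters L p u with hT
  have hxT : ∀ a ∈ x, a ∈ T := by
    intro a ha
    refine ⟨hxn a ha, ?_⟩
    have h1 : K * 1 ≤ K * countOcc a x :=
      Nat.mul_le_mul_left K (countOcc_pos_of_mem ha)
    have h2 : countOcc a (wpow x K) ≤ countOcc a u := by
      simp only [hu, countOcc_append]; omega
    rw [countOcc_wpow] at h2
    omega
  have hTne : T ≠ ∅ := by
    rcases List.exists_mem_of_ne_nil x hx with ⟨a, ha⟩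
    intro hE
    have := hxT a ha
    rw [hE] at this
    exact this
  have hwnil : removeLetters T (wpow x K) = [] :=
    removeLetters_eq_nil (fun a ha => hxT a (mem_wpow ha))
  have hru : removeLetters T u = removeLetters T u' := by
    simp only [hu, hu', removeLetters_append, hwnil]
    simp
  have h1 := (hop u).resolve_left hTne
  have h2 := (hop u').resolve_left (by rw [← hTT]; exact hTne)
  rw [← hTT] at h2
  rw [← h1, ← h2, hru]

theorem algebraic_of_operational' {α : Type*} (L : Set (List α))
    (p : ℕ) (hop : OperationalSE L p) :
    ∀ n : ℕ, 0 < n → (∀ x : List α, SyntEq L (wpow x n) (wpow x (2 * n))) →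
      ((∀ x y : List α, SyntEq L (y ++ wpow x (n+1)) (wpow x (n+1) ++ y)) ∧
       (∀ (x y z : List α) (a : α), ¬ Neutral L a → y ∈ L →
         x ++ y ++ z ++ wpow [a] n ∈ L)) := by
  intro n hn hidem
  set k : ℕ := max p 1 with hk
  have hk1 : 1 ≤ k := le_max_right p 1
  have hKp : p ≤ k * n := by
    calc p = p * 1 := (mul_one p).symm
    _ ≤ k * n := Nat.mul_le_mul (le_max_left p 1) hn
  constructor
  · -- ZG equation
    intro x y
    set N : Set α := {a | Neutral L a} with hN
    set x' : List α := removeLetters N x with hx'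
    have hxx' : SyntEq L x x' := removeNeutral_syntEq L x
    have hpow : SyntEq L (wpow x (n+1)) (wpow x' (n+1)) := hxx'.wpowCongr (n+1)
    by_cases hnil : x' = []
    · -- x is equivalent to the empty word
      have hxe : SyntEq L (wpow x (n+1)) ([] : List α) := by
        rw [hnil] at hpow
        have : wpow ([] : List α) (n+1) = [] := by
          induction (n+1) with
          | zero => rfl
          | succ m ih => simp [wpow, ih]
        rw [this] at hpow
        exact hpow
      have h1 : SyntEq L (y ++ wpow x (n+1)) y := by
        have := SyntEq.appendLeft (L := L) y hxe
        simpa using this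
      have h2 : SyntEq L y (wpow x (n+1) ++ y) := by
        have := SyntEq.appendRight (L := L) y hxe.symm'
        simpa using this
      exact h1.trans' h2
    · -- main case
      have hxn' : ∀ a ∈ x', ¬ Neutral L a := by
        intro a ha
        exact mem_removeLetters_notin ha
      have hidem' : SyntEq L (wpow x' n) (wpow x' (2 * n)) :=
        ((hxx'.symm'.wpowCongr n).trans' (hidem x)).trans' (hxx'.wpowCongr (2*n))
      have hpump : SyntEq L (wpow x' n) (wpow x' (k * n)) := pump hidem' k hk1
      have hpow2 : SyntEq L (wpow x (n+1)) (wpow x' (k * n + 1)) := by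
        refine hpow.trans' ?_
        show SyntEq L (x' ++ wpow x' n) (x' ++ wpow x' (k*n))
        exact SyntEq.appendLeft x' hpump
      have key : SyntEq L (y ++ wpow x' (k*n+1)) (wpow x' (k*n+1) ++ y) := by
        intro s t
        have := claimA hop x' s y t hnil hxn' (k*n+1) (by omega)
        simpa [List.append_assoc] using this
      exact ((SyntEq.appendLeft y hpow2).trans' key).trans'
        (SyntEq.appendRight y hpow2.symm')
  · -- semi-extensibility
    intro x y z a hna hy
    set m : ℕ := k * n with hm
    set u : List α := x ++ y ++ z ++ wpow [a] m with huu
    set T : Set α := freqLetters L p u with hT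
    have haT : a ∈ T := by
      refine ⟨hna, ?_⟩
      have h2 : countOcc a (wpow [a] m) ≤ countOcc a u := by
        simp only [huu, countOcc_append]; omega
      rw [countOcc_wpow] at h2
      have : countOcc a [a] = 1 := by simp [countOcc]
      rw [this, mul_one] at h2
      omega
    have hTne : T ≠ ∅ := fun hE => by rw [hE] at haT; exact haT
    have hiff := (hop u).resolve_left hTne
    have hmem : removeLetters T u ∈ Cond L T := by
      refine ⟨y, hy, ?_⟩
      rw [removeLetters_idem]
      exact ⟨removeLetters T x,
        removeLetters T z ++ removeLetters T (wpow [a] m),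
        by simp only [huu, removeLetters_append, List.append_assoc]⟩
    have huL : u ∈ L := hiff.1 hmem
    -- now deflate the power of a
    have hpump : SyntEq L (wpow [a] n) (wpow [a] m) := pump (hidem [a]) k hk1
    have := (hpump (x ++ y ++ z) []).2
    simp only [List.append_nil] at this
    have := this (by simpa [huu, List.append_assoc] using huL)
    simpa [List.append_assoc] using this


/-- the operational condition implies the algebraic condition
for every idempotent-power exponent `n`. -/
theorem algebraic_of_operational {α : Type*} [Finite α] (L : Set (List α))
    (hreg : Finite (Quotient (syntSetoid L)))
    (p : ℕ) (hop : OperationalSE L p) :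
    ∀ n : ℕ, 0 < n → (∀ x : List α, SyntEq L (wpow x n) (wpow x (2 * n))) →
      AlgebraicSE L n := by
  intro n hn hidem
  exact algebraic_of_operational' L p hop n hn hidem
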